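/- Delta rule for join: for relations V1 over schema S1 and V2 over schema S2 with payloads in a commutative ring, and updates δV1, δV2, we have (V1 ⊎ δV1) · (V2 ⊎ δV2) = (V1 · V2) ⊎ (δV1 · V2) ⊎ (V1 · δV2) ⊎ (δV1 · δV2), where the join is defined by (V1 · V2)(t) = V1(π_{S1}(t)) * V2(π_{S2}(t)) for tuples t over S1 ∪ S2. -/

import Mathlib

/-- Union of relations: pointwise addition. -/
def relUnion {τ : Type*} {D : Type*} [CommRing D] (R S : τ → D) : τ → D :=
  fun t => R t + S t

/-- Join of relations over schemas S1 and S2: given projections from tuples over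
S1 ∪ S2 to tuples over S1 and over S2, the payload is the ring product. -/
def relJoin {τ τ1 τ2 : Type*} {D : Type*} [CommRing D]
    (π1 : τ → τ1) (π2 : τ → τ2) (V1 : τ1 → D) (V2 : τ2 → D) : τ → D :=
  fun t => V1 (π1 t) * V2 (π2 t)

section JoinUnion

variable {τ τ1 τ2 D : Type*} [CommRing D] (π1 : τ → τ1) (π2 : τ → τ2)

theorem relUnion_assoc (R S T : τ → D) :
    relUnion (relUnion R S) T = relUnion R (relUnion S T) :=
  funext fun _ => add_assoc _ _ _

theorem relJoin_relUnion_left (V dV : τ1 → D) (W : τ2 → D) :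
    relJoin π1 π2 (relUnion V dV) W = relUnion (relJoin π1 π2 V W) (relJoin π1 π2 dV W) :=
  funext fun _ => add_mul _ _ _

theorem relJoin_relUnion_right (V : τ1 → D) (W dW : τ2 → D) :
    relJoin π1 π2 V (relUnion W dW) = relUnion (relJoin π1 π2 V W) (relJoin π1 π2 V dW) :=
  funext fun _ => mul_add _ _ _

end JoinUnion

/-- Delta rule for join:
(V1 ⊎ δV1)·(V2 ⊎ δV2) = (V1·V2) ⊎ (δV1·V2) ⊎ (V1·δV2) ⊎ (δV1·δV2). -/
theorem delta_join {τ τ1 τ2 : Type*} {D : Type*} [CommRing D]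
    (π1 : τ → τ1) (π2 : τ → τ2)
    (V1 dV1 : τ1 → D) (V2 dV2 : τ2 → D) :
    relJoin π1 π2 (relUnion V1 dV1) (relUnion V2 dV2) =
      relUnion (relUnion (relUnion (relJoin π1 π2 V1 V2) (relJoin π1 π2 dV1 V2))
        (relJoin π1 π2 V1 dV2)) (relJoin π1 π2 dV1 dV2) := by
  rw [relJoin_relUnion_right, relJoin_relUnion_left, relJoin_relUnion_left, ← relUnion_assoc]
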